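/- For every r ≥ 1, the polynomial q(z) = 1 - 2z - z² + 2z^{r+1} - 2z^{r+2} + 2z^{2r+2} has no root in the interval (-1, 0]. -/

import Mathlib

/-- q(z) = 1 - 2z - z² + 2z^{r+1} - 2z^{r+2} + 2z^{2r+2}. -/
def qPoly (r : ℕ) (z : ℝ) : ℝ :=
  1 - 2 * z - z ^ 2 + 2 * z ^ (r + 1) - 2 * z ^ (r + 2) + 2 * z ^ (2 * r + 2)

/-! On `(-1, 0]` the factorisation `qPoly_eq` exhibits `q z` as the positive number `1 - z²`
plus `-2z ≥ 0` times two factors that are nonnegative because `|z| < 1`. -/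

theorem qPoly_eq (r : ℕ) (z : ℝ) :
    qPoly r z = (1 - z ^ 2) - 2 * z * ((1 + z ^ (r + 1)) * (1 - z ^ r)) := by
  unfold qPoly
  ring

theorem qPoly_pos (r : ℕ) {z : ℝ} (hz₁ : -1 < z) (hz₀ : z ≤ 0) : 0 < qPoly r z := by
  have habs : |z| < 1 := abs_lt.mpr ⟨hz₁, by linarith⟩
  have hsq : 0 < 1 - z ^ 2 := by nlinarith
  have hpow_succ : -1 < z ^ (r + 1) :=
    (abs_lt.mp (by rw [abs_pow]; exact pow_lt_one₀ (abs_nonneg z) habs r.succ_ne_zero)).1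
  have hpow : z ^ r ≤ 1 :=
    (abs_le.mp (by rw [abs_pow]; exact pow_le_one₀ (abs_nonneg z) habs.le)).2
  have hprod : 0 ≤ -2 * z * ((1 + z ^ (r + 1)) * (1 - z ^ r)) :=
    mul_nonneg (by linarith) (mul_nonneg (by linarith) (by linarith))
  rw [qPoly_eq]
  linarith

theorem qPoly_no_root_neg_general (r : ℕ) :
    ∀ z ∈ Set.Ioc (-1 : ℝ) 0, qPoly r z ≠ 0 :=
  fun _ hz => (qPoly_pos r hz.1 hz.2).ne'

theorem qPoly_no_root_neg (r : ℕ) (hr : 1 ≤ r) :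
    ∀ z ∈ Set.Ioc (-1 : ℝ) 0, qPoly r z ≠ 0 :=
  qPoly_no_root_neg_general r
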